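/- arXiv:2012.01530 — 3 statements merged into one kernel-verified Lean document; each statement's English description precedes it below -/
import Mathlib

section
/- Let F be a field and S a finite subset of F. For any nonzero k-variate polynomial P of total degree at most d, the sum over all points a in S^k of the multiplicity of P at a is at most d·|S|^(k-1). -/
open MvPolynomial

/-- The Hasse derivative of type `e` of a multivariate polynomial `f`:
the coefficient of `z^e` in `f(x+z)` (here the outer variables play the role of `z`). -/
noncomputable def hasseDeriv {σ F : Type*} [CommRing F] (e : σ →₀ ℕ) (f : MvPolynomial σ F) :
    MvPolynomial σ F :=
  MvPolynomial.coeff e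
    (MvPolynomial.aeval (fun i => MvPolynomial.C (MvPolynomial.X i) + MvPolynomial.X i) f)

/-- The order (total degree) of a derivative type `e`. -/
def ord {σ : Type*} (e : σ →₀ ℕ) : ℕ := e.sum fun _ n => n

set_option linter.unusedVariables false
set_option linter.unusedSectionVars false

namespace MSZ

variable {F : Type*} [Field F] {k : ℕ}

/-- Translation of a multivariate polynomial: `T a P = P(a + x)`. -/
noncomputable def T (a : Fin k → F) : MvPolynomial (Fin k) F →ₐ[F] MvPolynomial (Fin k) F :=
  aeval fun i => C (a i) + X i

lemma T_X (a : Fin k → F) (i : Fin k) : T a (X i) = C (a i) + X i := aeval_X _ i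

lemma T_comp_T (a b : Fin k → F) : (T a).comp (T b) = T (a + b) := by
  apply MvPolynomial.algHom_ext
  intro i
  simp [T, aeval_X, map_add, aeval_C, Algebra.algebraMap_eq_smul_one]
  ring

lemma T_T (a b : Fin k → F) (p : MvPolynomial (Fin k) F) : T a (T b p) = T (a + b) p := by
  rw [← T_comp_T]; rfl

lemma T_zero (p : MvPolynomial (Fin k) F) : T (0 : Fin k → F) p = p := by
  have : (T (0 : Fin k → F)) = aeval X := by
    apply MvPolynomial.algHom_ext; intro i; simp [T]
  rw [this, aeval_X_left_apply]

lemma T_injective (a : Fin k → F) : Function.Injective (T a) := by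
  intro p q h
  have := congrArg (T (-a)) h
  rwa [T_T, T_T, neg_add_cancel, T_zero, T_zero] at this

lemma T_ne_zero {p : MvPolynomial (Fin k) F} (hp : p ≠ 0) (a : Fin k → F) : T a p ≠ 0 := by
  intro h
  exact hp (T_injective a (by rw [h, map_zero]))


lemma eval_hasseDeriv (a : Fin k → F) (e : Fin k →₀ ℕ) (P : MvPolynomial (Fin k) F) :
    eval a (hasseDeriv e P) = coeff e (T a P) := by
  have hmap : MvPolynomial.map (eval a)
      (aeval (fun i => C (X i) + X i : Fin k → MvPolynomial (Fin k) (MvPolynomial (Fin k) F)) P)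
      = T a P := by
    induction P using MvPolynomial.induction_on with
    | C c => simp [T]
    | add p q hp hq => simp only [map_add, hp, hq]
    | mul_X p i hp => simp only [map_mul, hp, T, aeval_X, map_add, MvPolynomial.map_C,
        MvPolynomial.map_X, eval_X]
  rw [hasseDeriv, ← hmap, MvPolynomial.coeff_map]

/-- trailing (minimal) total degree of the monomials of `Q`. -/
noncomputable def tmin (Q : MvPolynomial (Fin k) F) : ℕ :=
  sInf (ord '' (Q.support : Set (Fin k →₀ ℕ)))

/-- Multiplicity of `P` at `a`. -/
noncomputable def mult (P : MvPolynomial (Fin k) F) (a : Fin k → F) : ℕ := tmin (T a P)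

lemma tmin_le {Q : MvPolynomial (Fin k) F} {e : Fin k →₀ ℕ} (h : coeff e Q ≠ 0) :
    tmin Q ≤ ord e :=
  Nat.sInf_le ⟨e, by simpa [MvPolynomial.mem_support_iff] using h, rfl⟩

lemma coeff_eq_zero_of_lt_tmin {Q : MvPolynomial (Fin k) F} {e : Fin k →₀ ℕ}
    (h : ord e < tmin Q) : coeff e Q = 0 := by
  by_contra hc
  exact absurd (tmin_le hc) (not_le.2 h)

lemma exists_tmin {Q : MvPolynomial (Fin k) F} (hQ : Q ≠ 0) :
    ∃ e, coeff e Q ≠ 0 ∧ ord e = tmin Q := by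
  have hne : (ord '' (Q.support : Set (Fin k →₀ ℕ))).Nonempty := by
    obtain ⟨e, he⟩ := (MvPolynomial.support_nonempty.2 hQ)
    exact ⟨ord e, e, Finset.mem_coe.2 he, rfl⟩
  obtain ⟨e, he, heq⟩ := Nat.sInf_mem hne
  exact ⟨e, by simpa [MvPolynomial.mem_support_iff] using he, heq⟩

lemma ord_cons (j : ℕ) (e : Fin k →₀ ℕ) : ord (e.cons j) = j + ord e := by
  rw [ord, ord, Finsupp.sum_cons]

lemma sum_rootMultiplicity_le (q : Polynomial F) (hq : q ≠ 0) (S : Finset F) :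
    ∑ b ∈ S, q.rootMultiplicity b ≤ q.natDegree := by
  classical
  calc ∑ b ∈ S, q.rootMultiplicity b = ∑ b ∈ S, q.roots.count b := by
        simp [Polynomial.count_roots]
    _ ≤ Multiset.card q.roots := by
        classical
        calc ∑ b ∈ S, q.roots.count b
            = ∑ b ∈ S ∩ q.roots.toFinset, q.roots.count b := by
              apply (Finset.sum_subset (Finset.inter_subset_left) _).symm
              intro x hx hx'
              rw [Multiset.count_eq_zero]
              intro hmem
              exact hx' (Finset.mem_inter.2 ⟨hx, Multiset.mem_toFinset.2 hmem⟩)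
          _ ≤ ∑ b ∈ q.roots.toFinset, q.roots.count b :=
              Finset.sum_le_sum_of_subset (Finset.inter_subset_right)
          _ = Multiset.card q.roots := Multiset.toFinset_sum_count_eq _
    _ ≤ q.natDegree := Polynomial.card_roots' q


/-- Extract the `e`-th coefficient (in the inner `MvPolynomial`) of each coefficient. -/
noncomputable def lext (e : Fin k →₀ ℕ) (r : Polynomial (MvPolynomial (Fin k) F)) :
    Polynomial F :=
  ⟨Finsupp.mapRange (MvPolynomial.coeff e) (MvPolynomial.coeff_zero e) r.toFinsupp.coeff |> AddMonoidAlgebra.ofCoeff⟩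

lemma lext_coeff (e : Fin k →₀ ℕ) (r : Polynomial (MvPolynomial (Fin k) F)) (j : ℕ) :
    (lext e r).coeff j = MvPolynomial.coeff e (r.coeff j) := by
  rw [lext, Polynomial.coeff_ofFinsupp, Finsupp.mapRange_apply, Polynomial.toFinsupp_apply]

lemma lext_add (e : Fin k →₀ ℕ) (r s : Polynomial (MvPolynomial (Fin k) F)) :
    lext e (r + s) = lext e r + lext e s := by
  ext j
  simp [lext_coeff, Polynomial.coeff_add]

lemma lext_monomial (e : Fin k →₀ ℕ) (n : ℕ) (c : MvPolynomial (Fin k) F) :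
    lext e (Polynomial.monomial n c) = Polynomial.monomial n (MvPolynomial.coeff e c) := by
  ext j
  rw [lext_coeff, Polynomial.coeff_monomial, Polynomial.coeff_monomial]
  split <;> simp

lemma lext_comp (e : Fin k →₀ ℕ) (b : F) (r : Polynomial (MvPolynomial (Fin k) F)) :
    lext e (r.comp (Polynomial.X + Polynomial.C (C b)))
      = (lext e r).comp (Polynomial.X + Polynomial.C b) := by
  induction r using Polynomial.induction_on' with
  | add p q hp hq =>
      rw [Polynomial.add_comp, lext_add, lext_add, hp, hq, Polynomial.add_comp]
  | monomial n c =>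
      have hmap : (Polynomial.X + Polynomial.C (C b) : Polynomial (MvPolynomial (Fin k) F))
          = Polynomial.map (MvPolynomial.C : F →+* MvPolynomial (Fin k) F)
              (Polynomial.X + Polynomial.C b) := by
        rw [Polynomial.map_add, Polynomial.map_X, Polynomial.map_C]
      rw [Polynomial.monomial_comp, lext_monomial, Polynomial.monomial_comp, hmap,
        ← Polynomial.map_pow]
      ext j
      rw [lext_coeff, Polynomial.coeff_C_mul, Polynomial.coeff_C_mul, Polynomial.coeff_map,
        mul_comm, MvPolynomial.coeff_C_mul, mul_comm]

/-- Translating a polynomial and then separating the first variable equals separating,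
mapping the translation on coefficients, and composing with a shift. -/
lemma finSuccEquiv_T (b : F) (a : Fin k → F) (P : MvPolynomial (Fin (k + 1)) F) :
    finSuccEquiv F k (T (Fin.cons b a) P)
      = ((Polynomial.mapAlgHom (T a)) (finSuccEquiv F k P)).comp
          (Polynomial.X + Polynomial.C (C b)) := by
  have : ((finSuccEquiv F k).toAlgHom.comp (T (Fin.cons b a)))
      = (((Polynomial.aeval (Polynomial.X + Polynomial.C (C b))).restrictScalars F).comp
          ((Polynomial.mapAlgHom (T a)).comp (finSuccEquiv F k).toAlgHom)) := by
    have hC : ∀ c : F, finSuccEquiv F k (C c) = Polynomial.C (C c) := fun c => by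
      rw [← MvPolynomial.algebraMap_eq, AlgEquiv.commutes, Polynomial.algebraMap_apply,
        MvPolynomial.algebraMap_eq]
    apply MvPolynomial.algHom_ext
    intro i
    refine Fin.cases ?_ ?_ i
    · simp [T, finSuccEquiv_X_zero, hC, Polynomial.aeval_def, add_comm]
    · intro j
      simp [T, finSuccEquiv_X_succ, hC, Polynomial.aeval_def, Polynomial.mapAlgHom]
  have h2 := congrArg (fun f => f P) (congrArg (fun g => g.toFun) this)
  simpa [Polynomial.comp, Polynomial.aeval_def] using h2


lemma mult_fin_zero {P : MvPolynomial (Fin 0) F} (hP : P ≠ 0) (a : Fin 0 → F) :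
    mult P a = 0 := by
  obtain ⟨e, he, heq⟩ := exists_tmin (T_ne_zero hP a)
  have he0 : e = 0 := by ext i; exact i.elim0
  rw [mult, ← heq, he0]
  simp [ord]

lemma sum_grid_succ (S : Finset F) (f : (Fin (k + 1) → F) → ℕ) :
    ∑ c ∈ Fintype.piFinset (fun _ : Fin (k + 1) => S), f c
      = ∑ a ∈ Fintype.piFinset (fun _ : Fin k => S), ∑ b ∈ S, f (Fin.cons b a) := by
  rw [← Finset.sum_product']
  refine Finset.sum_nbij' (fun c => (Fin.tail c, c 0)) (fun p => Fin.cons p.2 p.1) ?_ ?_ ?_ ?_ ?_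
  · intro c hc
    rw [Fintype.mem_piFinset] at hc
    exact Finset.mem_product.2 ⟨Fintype.mem_piFinset.2 fun i => hc _, hc 0⟩
  · intro p hp
    rw [Finset.mem_product] at hp
    refine Fintype.mem_piFinset.2 fun i => ?_
    refine Fin.cases ?_ ?_ i
    · simpa using hp.2
    · intro j; simpa using Fintype.mem_piFinset.1 hp.1 j
  · intro c _; exact Fin.cons_self_tail c
  · intro p _; simp
  · intro c _; rw [Fin.cons_self_tail]

theorem core : ∀ (k d : ℕ) (S : Finset F) (P : MvPolynomial (Fin k) F), P ≠ 0 →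
    P.totalDegree ≤ d →
    ∑ a ∈ Fintype.piFinset (fun _ : Fin k => S), mult P a ≤ d * S.card ^ (k - 1) := by
  intro k
  induction k with
  | zero =>
    intro d S P hP _
    rw [Finset.sum_congr rfl fun a _ => mult_fin_zero hP a]
    simp
  | succ k ih =>
    intro d S P hP hdeg
    classical
    set p := finSuccEquiv F k P with hp_def
    have hp : p ≠ 0 := by
      intro h
      apply hP
      have := congrArg (finSuccEquiv F k).symm h
      simpa [hp_def] using this
    set t := p.natDegree with ht_def
    set Pt := p.coeff t with hPt_def
    have hPt : Pt ≠ 0 := by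
      rw [hPt_def, ht_def, ← Polynomial.leadingCoeff]
      exact Polynomial.leadingCoeff_ne_zero.2 hp
    have hdPt : Pt.totalDegree + t ≤ d :=
      le_trans (totalDegree_coeff_finSuccEquiv_add_le P t (by rw [← hp_def, ← hPt_def]; exact hPt))
        hdeg
    have htd : t ≤ d := le_trans (Nat.le_add_left _ _) hdPt
    have key : ∀ a ∈ Fintype.piFinset (fun _ : Fin k => S),
        ∑ b ∈ S, mult P (Fin.cons b a) ≤ S.card * mult Pt a + t := by
      intro a _
      obtain ⟨e, he, heq⟩ := exists_tmin (T_ne_zero hPt a)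
      set q : Polynomial F := lext e (Polynomial.mapAlgHom (T a) p) with hq_def
      have hqcoeff : ∀ j, q.coeff j = MvPolynomial.coeff e (T a (p.coeff j)) := by
        intro j
        rw [hq_def, lext_coeff]
        congr 1
        simp [Polynomial.mapAlgHom, Polynomial.coeff_map]
      have hqt : q.coeff t ≠ 0 := by rw [hqcoeff, ← hPt_def]; exact he
      have hq0 : q ≠ 0 := fun h => hqt (by rw [h, Polynomial.coeff_zero])
      have hqdeg : q.natDegree ≤ t := by
        refine Polynomial.natDegree_le_iff_coeff_eq_zero.2 fun j hj => ?_
        rw [hqcoeff, Polynomial.coeff_eq_zero_of_natDegree_lt hj, map_zero,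
          MvPolynomial.coeff_zero]
      have hb : ∀ b ∈ S, mult P (Fin.cons b a) ≤ mult Pt a + q.rootMultiplicity b := by
        intro b _
        rcases le_or_gt (mult P (Fin.cons b a)) (mult Pt a) with h | h
        · exact le_trans h (Nat.le_add_right _ _)
        · set r := mult P (Fin.cons b a) - mult Pt a with hr
          suffices hrm : r ≤ q.rootMultiplicity b by omega
          have hdvd1 : Polynomial.X ^ r ∣ q.comp (Polynomial.X + Polynomial.C b) := by
            rw [Polynomial.X_pow_dvd_iff]
            intro j hj
            have hcomp : q.comp (Polynomial.X + Polynomial.C b)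
                = lext e ((Polynomial.mapAlgHom (T a) p).comp
                    (Polynomial.X + Polynomial.C (C b))) := (lext_comp e b _).symm
            rw [hcomp, lext_coeff, ← finSuccEquiv_T, ← hp_def] at *
            rw [finSuccEquiv_coeff_coeff]
            apply coeff_eq_zero_of_lt_tmin
            rw [ord_cons, heq]
            have h1 : mult Pt a = tmin (T a Pt) := rfl
            have h2 : mult P (Fin.cons b a) = tmin (T (Fin.cons b a) P) := rfl
            omega
          have hX : (Polynomial.X + Polynomial.C b).comp (Polynomial.X - Polynomial.C b)
              = Polynomial.X := by
            simp
          have hdvd2 : (Polynomial.X - Polynomial.C b) ^ r ∣ q := by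
            obtain ⟨E, hE⟩ := hdvd1
            refine ⟨E.comp (Polynomial.X - Polynomial.C b), ?_⟩
            have h3 := congrArg (fun u => Polynomial.comp u (Polynomial.X - Polynomial.C b)) hE
            simpa [Polynomial.mul_comp, Polynomial.pow_comp, Polynomial.X_comp,
              Polynomial.comp_assoc, hX, Polynomial.comp_X] using h3
          exact (Polynomial.le_rootMultiplicity_iff hq0).2 hdvd2
      calc ∑ b ∈ S, mult P (Fin.cons b a)
          ≤ ∑ b ∈ S, (mult Pt a + q.rootMultiplicity b) := Finset.sum_le_sum hb
        _ = S.card * mult Pt a + ∑ b ∈ S, q.rootMultiplicity b := by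
            rw [Finset.sum_add_distrib, Finset.sum_const, smul_eq_mul]
        _ ≤ S.card * mult Pt a + t :=
            Nat.add_le_add_left ((sum_rootMultiplicity_le q hq0 S).trans hqdeg) _
    have hcard : (Fintype.piFinset (fun _ : Fin k => S)).card = S.card ^ k := by
      simp [Fintype.card_piFinset]
    have hPt_sum : ∑ a ∈ Fintype.piFinset (fun _ : Fin k => S), mult Pt a
        ≤ (d - t) * S.card ^ (k - 1) := ih (d - t) S Pt hPt (by omega)
    have hstep : S.card * ∑ a ∈ Fintype.piFinset (fun _ : Fin k => S), mult Pt a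
        ≤ (d - t) * S.card ^ k := by
      rcases Nat.eq_zero_or_pos k with hk | hk
      · subst hk
        rw [Finset.sum_congr rfl fun a _ => mult_fin_zero hPt a]
        simp
      · calc S.card * ∑ a ∈ Fintype.piFinset (fun _ : Fin k => S), mult Pt a
            ≤ S.card * ((d - t) * S.card ^ (k - 1)) := Nat.mul_le_mul_left _ hPt_sum
          _ = (d - t) * S.card ^ k := by
              rw [← mul_assoc, mul_comm (S.card) (d - t), mul_assoc, ← pow_succ']
              congr 2
              omega
    calc ∑ c ∈ Fintype.piFinset (fun _ : Fin (k + 1) => S), mult P c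
        = ∑ a ∈ Fintype.piFinset (fun _ : Fin k => S), ∑ b ∈ S, mult P (Fin.cons b a) :=
          sum_grid_succ S _
      _ ≤ ∑ a ∈ Fintype.piFinset (fun _ : Fin k => S), (S.card * mult Pt a + t) :=
          Finset.sum_le_sum key
      _ = S.card * (∑ a ∈ Fintype.piFinset (fun _ : Fin k => S), mult Pt a)
            + t * S.card ^ k := by
          rw [Finset.sum_add_distrib, Finset.sum_const, smul_eq_mul, Finset.mul_sum, hcard,
            mul_comm _ t]
      _ ≤ (d - t) * S.card ^ k + t * S.card ^ k := Nat.add_le_add_right hstep _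
      _ = d * S.card ^ (k + 1 - 1) := by
          rw [← add_mul]
          congr 2
          omega

end MSZ


/-- Multiplicity Schwartz–Zippel lemma: for a nonzero `k`-variate polynomial `P` of total
degree at most `d`, the sum over points `a` of the grid `S^k` of (any lower bound `μ a` on)
the multiplicity of `P` at `a` is at most `d * |S|^(k-1)`.  Here "`P` has multiplicity at
least `μ a` at `a`" is expressed by the vanishing at `a` of all Hasse derivatives of `P` of
order less than `μ a`. -/
theorem mult_schwartz_zippel {F : Type*} [Field F] (k d : ℕ) (S : Finset F)
    (P : MvPolynomial (Fin k) F) (hP : P ≠ 0) (hdeg : P.totalDegree ≤ d)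
    (μ : (Fin k → F) → ℕ)
    (hμ : ∀ a ∈ Fintype.piFinset fun _ : Fin k => S, ∀ e : Fin k →₀ ℕ,
      ord e < μ a → MvPolynomial.eval a (hasseDeriv e P) = 0) :
    ∑ a ∈ Fintype.piFinset (fun _ : Fin k => S), μ a ≤ d * S.card ^ (k - 1) := by
  have hle : ∀ a ∈ Fintype.piFinset (fun _ : Fin k => S), μ a ≤ MSZ.mult P a := by
    intro a ha
    by_contra hlt
    push_neg at hlt
    obtain ⟨e, he, heq⟩ := MSZ.exists_tmin (MSZ.T_ne_zero hP a)
    have h0 := hμ a ha e (by rw [heq]; exact hlt)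
    rw [MSZ.eval_hasseDeriv] at h0
    exact he h0
  exact le_trans (Finset.sum_le_sum hle) (MSZ.core k d S P hP hdeg)
end

section
/- Generalized Wronskian criterion (independence implies nonvanishing Wronskian): Let F have characteristic zero or greater than d, and let f_1,...,f_w ∈ F[x_1,...,x_k] have individual degree at most d in each variable. If f_1,...,f_w are linearly independent over F, then there exist exponent vectors e_1,...,e_w ∈ (Z_{≥0})^k with ||e_i||_1 ≤ i−1 such that the w×w matrix with (i,j)-entry the Hasse derivative ∂̸f_j/∂̸x^{e_i} has nonzero determinant in F[x_1,...,x_k]. -/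
set_option maxHeartbeats 1000000
set_option synthInstance.maxHeartbeats 200000


open MvPolynomial

namespace Wronsk
variable {σ F : Type*} [CommRing F]

/-- the shift substitution -/
noncomputable def Φ : σ → MvPolynomial σ (MvPolynomial σ F) := fun i => C (X i) + X i

theorem hasseDeriv_def (e : σ →₀ ℕ) (f : MvPolynomial σ F) :
    hasseDeriv e f = coeff e (aeval (Φ (σ := σ) (F := F)) f) := rfl

/-- coefficient-wise partial derivative -/
noncomputable def Dmap (i : σ) (g : MvPolynomial σ (MvPolynomial σ F)) :
    MvPolynomial σ (MvPolynomial σ F) :=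
  ∑ u ∈ g.support, monomial u (pderiv i (coeff u g))

theorem coeff_Dmap (i : σ) (e : σ →₀ ℕ) (g : MvPolynomial σ (MvPolynomial σ F)) :
    coeff e (Dmap i g) = pderiv i (coeff e g) := by
  classical
  rw [Dmap]
  rw [MvPolynomial.coeff_sum]
  simp only [coeff_monomial]
  rw [Finset.sum_ite_eq' g.support e (fun u => pderiv i (coeff u g))]
  by_cases h : e ∈ g.support
  · simp [h]
  · simp [h, MvPolynomial.notMem_support_iff.mp h]

theorem Dmap_add (i : σ) (g h : MvPolynomial σ (MvPolynomial σ F)) :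
    Dmap i (g + h) = Dmap i g + Dmap i h := by
  apply MvPolynomial.ext
  intro e
  simp [coeff_Dmap, coeff_add]

theorem Dmap_mul (i : σ) (g h : MvPolynomial σ (MvPolynomial σ F)) :
    Dmap i (g * h) = Dmap i g * h + g * Dmap i h := by
  classical
  apply MvPolynomial.ext
  intro e
  rw [coeff_Dmap, coeff_add, coeff_mul, coeff_mul, coeff_mul, map_sum, ← Finset.sum_add_distrib]
  refine Finset.sum_congr rfl fun p _ => ?_
  rw [pderiv_mul, coeff_Dmap, coeff_Dmap]

theorem Dmap_C (i : σ) (p : MvPolynomial σ F) : Dmap i (C p) = C (pderiv i p) := by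
  apply MvPolynomial.ext
  intro e
  classical
  rw [coeff_Dmap, coeff_C, coeff_C]
  split <;> simp

theorem Dmap_X (i j : σ) : Dmap i (X j : MvPolynomial σ (MvPolynomial σ F)) = 0 := by
  apply MvPolynomial.ext
  intro e
  classical
  rw [coeff_Dmap, MvPolynomial.coeff_X']
  split <;> simp

theorem Dmap_aeval (i : σ) (f : MvPolynomial σ F) :
    Dmap i (aeval (Φ (σ := σ) (F := F)) f) = aeval (Φ (σ := σ) (F := F)) (pderiv i f) := by
  induction f using MvPolynomial.induction_on with
  | C a =>
      rw [aeval_C, pderiv_C, map_zero]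
      have : (algebraMap F (MvPolynomial σ (MvPolynomial σ F))) a = C (C a) := rfl
      rw [this, Dmap_C, pderiv_C, map_zero]
  | add p q hp hq => rw [map_add, Dmap_add, hp, hq, map_add, map_add]
  | mul_X p j hp =>
      rw [map_mul, Dmap_mul, hp, aeval_X, pderiv_mul, map_add, map_mul, map_mul, aeval_X]
      congr 1
      rw [Φ]
      rw [Dmap_add, Dmap_C, Dmap_X, add_zero]
      classical
      by_cases hij : i = j
      · subst hij; simp [pderiv_X_self]
      · simp [pderiv_X_of_ne (Ne.symm hij)]

theorem pderiv_aeval (i : σ) (f : MvPolynomial σ F) :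
    pderiv i (aeval (Φ (σ := σ) (F := F)) f) = aeval (Φ (σ := σ) (F := F)) (pderiv i f) := by
  classical
  induction f using MvPolynomial.induction_on with
  | C a =>
      rw [aeval_C, pderiv_C, map_zero]
      have : (algebraMap F (MvPolynomial σ (MvPolynomial σ F))) a = C (C a) := rfl
      rw [this, pderiv_C]
  | add p q hp hq => rw [map_add, map_add, hp, hq, map_add, map_add]
  | mul_X p j hp =>
      rw [map_mul, pderiv_mul, hp, aeval_X, pderiv_mul, map_add, map_mul, map_mul, aeval_X]
      refine congrArg (HAdd.hAdd _) ?_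
      rw [Φ]
      rw [map_add, pderiv_C, zero_add]
      by_cases hij : i = j
      · subst hij; simp [pderiv_X_self]
      · simp [pderiv_X_of_ne (Ne.symm hij)]

theorem coeff_pderiv {R : Type*} [CommRing R] (i : σ) (e : σ →₀ ℕ) (g : MvPolynomial σ R) :
    coeff e (pderiv i g) = (e i + 1) • coeff (e + Finsupp.single i 1) g := by
  classical
  induction g using MvPolynomial.induction_on' with
  | add p q hp hq => rw [map_add, coeff_add, coeff_add, hp, hq, smul_add]
  | monomial u a =>
      rw [pderiv_monomial, coeff_monomial, coeff_monomial]
      by_cases hc : u = e + Finsupp.single i 1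
      · have hui : u i = e i + 1 := by
          subst hc; simp [Finsupp.single_apply]
        have h1 : u - Finsupp.single i 1 = e := by
          subst hc
          ext j
          simp only [Finsupp.tsub_apply, Finsupp.add_apply, Finsupp.single_apply]
          omega
        rw [if_pos h1, if_pos hc, hui, nsmul_eq_mul]
        push_cast
        ring
      · rw [if_neg hc, smul_zero]
        by_cases h1 : u - Finsupp.single i 1 = e
        · rw [if_pos h1]
          by_cases h0 : u i = 0
          · simp [h0]
          · exfalso
            apply hc
            ext j
            have := congrFun (congrArg (fun (t : σ →₀ ℕ) (j : σ) => t j) h1) j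
            simp only [Finsupp.tsub_apply, Finsupp.single_apply] at this
            simp only [Finsupp.add_apply, Finsupp.single_apply]
            by_cases hj : i = j
            · subst hj; simp at this ⊢; omega
            · simp only [if_neg hj] at this ⊢; omega
        · rw [if_neg h1]

theorem pderiv_hasseDeriv (i : σ) (e : σ →₀ ℕ) (f : MvPolynomial σ F) :
    pderiv i (hasseDeriv e f) = (e i + 1) • hasseDeriv (e + Finsupp.single i 1) f := by
  rw [hasseDeriv_def, hasseDeriv_def, ← coeff_Dmap, Dmap_aeval, ← pderiv_aeval, coeff_pderiv]

theorem degreeOf_aeval_Phi_le [Nontrivial F] (i : σ) (f : MvPolynomial σ F) :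
    degreeOf i (aeval (Φ (σ := σ) (F := F)) f) ≤ degreeOf i f := by
  classical
  conv_lhs => rw [f.as_sum]
  rw [map_sum]
  refine le_trans (degreeOf_sum_le _ _ _) ?_
  rw [Finset.sup_le_iff]
  intro u hu
  refine le_trans ?_ (monomial_le_degreeOf i hu)
  rw [aeval_monomial]
  refine le_trans (degreeOf_mul_le _ _ _) ?_
  have h1 : degreeOf i ((algebraMap F (MvPolynomial σ (MvPolynomial σ F))) (coeff u f)) = 0 := by
    have : (algebraMap F (MvPolynomial σ (MvPolynomial σ F))) (coeff u f) = C (C (coeff u f)) :=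
      rfl
    rw [this, degreeOf_C]
  rw [h1, zero_add]
  rw [Finsupp.prod]
  refine le_trans (degreeOf_prod_le _ _ _) ?_
  have h2 : ∀ j ∈ u.support, degreeOf i (Φ (σ := σ) (F := F) j ^ u j) ≤
      u j * (if i = j then 1 else 0) := by
    intro j _
    refine le_trans (degreeOf_pow_le _ _ _) ?_
    refine Nat.mul_le_mul_left _ ?_
    rw [Φ]
    refine le_trans (degreeOf_add_le _ _ _) ?_
    simp [degreeOf_C, degreeOf_X]
  refine le_trans (Finset.sum_le_sum h2) ?_
  rw [Finset.sum_mul_boole]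
  split <;> simp

theorem hasseDeriv_eq_zero {d : ℕ} [Nontrivial F] {i : σ} {e : σ →₀ ℕ}
    {f : MvPolynomial σ F} (hd : degreeOf i f ≤ d) (he : d < e i) : hasseDeriv e f = 0 := by
  rw [hasseDeriv_def]
  by_contra hne
  have hmem : e ∈ (aeval (Φ (σ := σ) (F := F)) f).support := by
    rwa [MvPolynomial.mem_support_iff]
  have := monomial_le_degreeOf i hmem
  have := degreeOf_aeval_Phi_le (F := F) i f
  omega

theorem indep_consequence {w : ℕ} (f : Fin w → MvPolynomial σ F)
    (hind : LinearIndependent F f) (c : Fin w → MvPolynomial σ F)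
    (hc : ∀ e : σ →₀ ℕ, ∑ j, c j * hasseDeriv e (f j) = 0) : c = 0 := by
  classical
  have hG : ∑ j, C (c j) * aeval (Φ (σ := σ) (F := F)) (f j) = 0 := by
    apply MvPolynomial.ext
    intro e
    rw [MvPolynomial.coeff_sum, coeff_zero]
    simp only [coeff_C_mul]
    exact hc e
  set ψ : MvPolynomial σ (MvPolynomial σ F) →ₐ[MvPolynomial σ F]
      MvPolynomial σ (MvPolynomial σ F) := aeval (fun i => X i - C (X i)) with hψ
  have key : ∀ p : MvPolynomial σ F, ψ (aeval (Φ (σ := σ) (F := F)) p) =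
      MvPolynomial.map (C : F →+* MvPolynomial σ F) p := by
    intro p
    induction p using MvPolynomial.induction_on with
    | C a =>
        have h1 : (aeval (Φ (σ := σ) (F := F))) (C a) = C (C a) := by
          rw [aeval_C]; rfl
        rw [h1, map_C]
        rw [hψ, aeval_C]
        rfl
    | add p q hp hq => rw [map_add, map_add, hp, hq, map_add]
    | mul_X p j hp =>
        rw [map_mul, map_mul, aeval_X, map_mul, hp, map_X]
        congr 1
        rw [Φ, map_add, aeval_X]
        have : ψ (C (X j)) = C (X j) := by rw [hψ, aeval_C]; rfl
        rw [this]
        ring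
  have h2 : ∑ j, C (c j) * MvPolynomial.map (C : F →+* MvPolynomial σ F) (f j) = 0 := by
    have := congrArg ψ hG
    rw [map_zero, map_sum] at this
    rw [← this]
    refine Finset.sum_congr rfl fun j _ => ?_
    rw [map_mul, key]
    congr 1
    rw [hψ, aeval_C]
    rfl
  have h3 : ∀ (u μ : σ →₀ ℕ), ∑ j, coeff μ (c j) * coeff u (f j) = 0 := by
    intro u μ
    have := congrArg (coeff u) h2
    rw [MvPolynomial.coeff_sum, coeff_zero] at this
    simp only [coeff_C_mul, coeff_map] at this
    have := congrArg (coeff μ) this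
    rw [MvPolynomial.coeff_sum, coeff_zero] at this
    rw [← this]
    refine Finset.sum_congr rfl fun x _ => ?_
    rw [mul_comm (c x) (C (coeff u (f x))), coeff_C_mul, mul_comm]
  funext j
  show c j = 0
  apply MvPolynomial.ext
  intro μ
  rw [coeff_zero]
  have hzero : ∑ j, coeff μ (c j) • f j = 0 := by
    apply MvPolynomial.ext
    intro u
    rw [MvPolynomial.coeff_sum, coeff_zero]
    simp only [MvPolynomial.coeff_smul, smul_eq_mul]
    exact h3 u μ
  exact Fintype.linearIndependent_iff.mp hind (fun j => coeff μ (c j)) hzero j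

theorem ord_zero' : ord (0 : σ →₀ ℕ) = 0 := by
  rw [ord, Finsupp.sum_zero_index]

theorem ord_add_single (e : σ →₀ ℕ) (i : σ) :
    ord (e + Finsupp.single i 1) = ord e + 1 := by
  classical
  rw [ord, ord, Finsupp.sum_add_index' (fun _ => rfl) (fun _ _ _ => rfl),
    Finsupp.sum_single_index rfl]

theorem hasseDeriv_zero' (f : MvPolynomial σ F) : hasseDeriv (0 : σ →₀ ℕ) f = f := by
  have key : ∀ p : MvPolynomial σ F, constantCoeff (aeval (Φ (σ := σ) (F := F)) p) = p := by
    intro p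
    induction p using MvPolynomial.induction_on with
    | C a =>
        rw [aeval_C]
        show constantCoeff (C (C a)) = C a
        rw [constantCoeff_C]
    | add p q hp hq => rw [map_add, map_add, hp, hq]
    | mul_X p j hp =>
        rw [map_mul, map_mul, hp, aeval_X]
        congr 1
        rw [Φ, map_add, constantCoeff_C, constantCoeff_X, add_zero]
  have h := key f
  rw [constantCoeff_eq] at h
  rw [hasseDeriv_def]
  exact h

end Wronsk

section Main

open Wronsk

variable {F : Type*} [Field F] {k w d : ℕ}

local notation "R" => MvPolynomial (Fin k) F
local notation "K" => FractionRing (MvPolynomial (Fin k) F)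

/-- the row vector of Hasse derivatives of type `e`, over the fraction field -/
noncomputable def rvec (f : Fin w → MvPolynomial (Fin k) F) (e : Fin k →₀ ℕ) : Fin w → K :=
  fun j => algebraMap R K (hasseDeriv e (f j))

/-- span of the rows of order at most `m` -/
noncomputable def SS (f : Fin w → MvPolynomial (Fin k) F) (m : ℕ) : Submodule K (Fin w → K) :=
  Submodule.span K {v : Fin w → K | ∃ e, ord e ≤ m ∧ v = rvec f e}

theorem SS_mono (f : Fin w → MvPolynomial (Fin k) F) {m m' : ℕ} (h : m ≤ m') :
    SS f m ≤ SS f m' :=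
  Submodule.span_mono (fun _ ⟨e, he, hv⟩ => ⟨e, le_trans he h, hv⟩)

theorem rvec_mem_of_stab (f : Fin w → MvPolynomial (Fin k) F)
    (hdeg : ∀ j : Fin w, ∀ i : Fin k, (f j).degreeOf i ≤ d)
    (hchar : ∀ n : ℕ, 0 < n → n ≤ d → (n : F) ≠ 0)
    {m : ℕ} (hstab : SS f (m + 1) ≤ SS f m) :
    ∀ e, rvec f e ∈ SS f m := by
  classical
  suffices h : ∀ n e, ord e = n → rvec f e ∈ SS f m by
    intro e; exact h (ord e) e rfl
  intro n
  induction n using Nat.strong_induction_on with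
  | _ n ih =>
  intro e he
  by_cases hord : ord e ≤ m
  · exact Submodule.subset_span ⟨e, hord, rfl⟩
  by_cases hbig : ∃ i, d < e i
  · obtain ⟨i, hi⟩ := hbig
    have hz : rvec f e = 0 := by
      funext j
      show algebraMap R K (hasseDeriv e (f j)) = 0
      rw [Wronsk.hasseDeriv_eq_zero (hdeg j i) hi, map_zero]
    rw [hz]; exact zero_mem _
  push_neg at hbig
  have hne : e ≠ 0 := by
    intro h0
    apply hord
    rw [h0, ord_zero']
    omega
  obtain ⟨i, hi⟩ := Finsupp.support_nonempty_iff.mpr hne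
  have hi' : e i ≠ 0 := Finsupp.mem_support_iff.mp hi
  set e' : Fin k →₀ ℕ := e - Finsupp.single i 1 with he'def
  have hee : e' + Finsupp.single i 1 = e := by
    ext j
    simp only [he'def, Finsupp.add_apply, Finsupp.tsub_apply, Finsupp.single_apply]
    by_cases hj : i = j
    · subst hj; simp; omega
    · simp [hj]
  have hei : e' i + 1 = e i := by
    have := congrFun (congrArg (fun (t : Fin k →₀ ℕ) (j : Fin k) => t j) hee) i
    simpa using this
  have horde' : ord e' < n := by
    have h1 : ord e = ord e' + 1 := by rw [← hee, ord_add_single]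
    omega
  have hmem' : rvec f e' ∈ SS f m := ih (ord e') (by omega) e' rfl
  rw [SS, Submodule.mem_span_set'] at hmem'
  obtain ⟨N, c, v, hsum⟩ := hmem'
  have hv : ∀ t : Fin N, ∃ et, ord et ≤ m ∧ (v t : Fin w → K) = rvec f et := fun t => (v t).2
  choose E hE1 hE2 using hv
  obtain ⟨b, hb⟩ := IsLocalization.exist_integer_multiples
    (nonZeroDivisors (MvPolynomial (Fin k) F)) Finset.univ c
  have hb' : ∀ t : Fin N, ∃ r : MvPolynomial (Fin k) F,
      algebraMap R K r = (b : MvPolynomial (Fin k) F) • c t :=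
    fun t => hb t (Finset.mem_univ t)
  choose p hp using hb'
  have heq : (algebraMap R K (b : MvPolynomial (Fin k) F)) • rvec f e'
      = ∑ t, (algebraMap R K (p t)) • rvec f (E t) := by
    rw [← hsum, Finset.smul_sum]
    refine Finset.sum_congr rfl fun t _ => ?_
    rw [smul_smul, ← Algebra.smul_def, hp t, hE2 t]
  have hcomp : ∀ j, (b : MvPolynomial (Fin k) F) * hasseDeriv e' (f j)
      = ∑ t, p t * hasseDeriv (E t) (f j) := by
    intro j
    apply IsFractionRing.injective (MvPolynomial (Fin k) F) K
    have h := congrFun heq j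
    rw [Pi.smul_apply, Finset.sum_apply] at h
    simp only [Pi.smul_apply, smul_eq_mul, rvec] at h
    rw [map_mul, map_sum]
    simp only [map_mul]
    exact h
  have hR : ∀ j, (b : MvPolynomial (Fin k) F)
        * (((e i : ℕ) : MvPolynomial (Fin k) F) * hasseDeriv e (f j))
      = (∑ t, (pderiv i (p t) * hasseDeriv (E t) (f j)
          + p t * (((E t i + 1 : ℕ) : MvPolynomial (Fin k) F)
              * hasseDeriv (E t + Finsupp.single i 1) (f j))))
        - pderiv i ((b : MvPolynomial (Fin k) F)) * hasseDeriv e' (f j) := by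
    intro j
    have h := congrArg (pderiv i) (hcomp j)
    rw [pderiv_mul, Wronsk.pderiv_hasseDeriv, map_sum] at h
    simp only [pderiv_mul, Wronsk.pderiv_hasseDeriv] at h
    rw [hee, hei] at h
    simp only [nsmul_eq_mul] at h
    linear_combination h
  have hkey : (algebraMap R K ((b : MvPolynomial (Fin k) F)
      * ((e i : ℕ) : MvPolynomial (Fin k) F))) • rvec f e ∈ SS f (m + 1) := by
    have hexp : (algebraMap R K ((b : MvPolynomial (Fin k) F)
          * ((e i : ℕ) : MvPolynomial (Fin k) F))) • rvec f e
        = (∑ t, ((algebraMap R K (pderiv i (p t))) • rvec f (E t)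
            + (algebraMap R K (p t * ((E t i + 1 : ℕ) : MvPolynomial (Fin k) F)))
                • rvec f (E t + Finsupp.single i 1)))
          - (algebraMap R K (pderiv i ((b : MvPolynomial (Fin k) F)))) • rvec f e' := by
      funext j
      have hs : (∑ t, ((pderiv i (p t) * hasseDeriv (E t) (f j))
            + p t * (((E t i + 1 : ℕ) : MvPolynomial (Fin k) F)
                * hasseDeriv (E t + Finsupp.single i 1) (f j))))
          = (∑ t, ((pderiv i (p t) * hasseDeriv (E t) (f j))
            + (p t * ((E t i + 1 : ℕ) : MvPolynomial (Fin k) F))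
                * hasseDeriv (E t + Finsupp.single i 1) (f j))) :=
        Finset.sum_congr rfl (fun t _ => by ring)
      have h := hR j
      rw [hs] at h
      have hRj : (b : MvPolynomial (Fin k) F) * ((e i : ℕ) : MvPolynomial (Fin k) F)
            * hasseDeriv e (f j)
          = (∑ t, ((pderiv i (p t) * hasseDeriv (E t) (f j))
            + (p t * ((E t i + 1 : ℕ) : MvPolynomial (Fin k) F))
                * hasseDeriv (E t + Finsupp.single i 1) (f j)))
            - pderiv i ((b : MvPolynomial (Fin k) F)) * hasseDeriv e' (f j) := by
        linear_combination h
      have h2 := congrArg (algebraMap R K) hRj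
      rw [map_sub, map_sum] at h2
      simp only [map_mul, map_add] at h2
      rw [Pi.smul_apply, Pi.sub_apply, Finset.sum_apply]
      simp only [Pi.add_apply, Pi.smul_apply, smul_eq_mul, rvec]
      simp only [map_mul]
      exact h2
    rw [hexp]
    apply sub_mem
    · apply Submodule.sum_mem
      intro t _
      apply add_mem
      · exact Submodule.smul_mem _ _ (Submodule.subset_span ⟨E t, le_trans (hE1 t) (Nat.le_succ m), rfl⟩)
      · refine Submodule.smul_mem _ _ (Submodule.subset_span ⟨E t + Finsupp.single i 1, ?_, rfl⟩)
        rw [ord_add_single]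
        have := hE1 t
        omega
    · exact Submodule.smul_mem _ _ (SS_mono f (Nat.le_succ m) (ih (ord e') (by omega) e' rfl))
  have hα : (algebraMap R K ((b : MvPolynomial (Fin k) F)
      * ((e i : ℕ) : MvPolynomial (Fin k) F))) ≠ 0 := by
    rw [map_ne_zero_iff _ (IsFractionRing.injective (MvPolynomial (Fin k) F) K)]
    apply mul_ne_zero (nonZeroDivisors.coe_ne_zero b)
    have hcast : ((e i : ℕ) : MvPolynomial (Fin k) F) = C ((e i : ℕ) : F) :=
      (map_natCast (C : F →+* MvPolynomial (Fin k) F) (e i)).symm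
    rw [hcast, Ne, MvPolynomial.C_eq_zero]
    exact hchar (e i) (Nat.pos_of_ne_zero hi') (hbig i)
  have hfin := (SS f m).smul_mem (algebraMap R K ((b : MvPolynomial (Fin k) F)
      * ((e i : ℕ) : MvPolynomial (Fin k) F)))⁻¹ (hstab hkey)
  rw [smul_smul, inv_mul_cancel₀ hα, one_smul] at hfin
  exact hfin

theorem span_rvec_top (f : Fin w → MvPolynomial (Fin k) F) (hind : LinearIndependent F f) :
    Submodule.span K (Set.range (rvec f)) = ⊤ := by
  classical
  by_contra hne
  have hlt : Submodule.span K (Set.range (rvec f)) < ⊤ := lt_top_iff_ne_top.mpr hne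
  obtain ⟨φ, hφ0, hφmap⟩ :=
    Submodule.exists_dual_map_eq_bot_of_lt_top hlt (by infer_instance)
  set c : Fin w → K := fun j => φ (fun j' => if j = j' then 1 else 0) with hc
  have hφx : ∀ x : Fin w → K, φ x = ∑ j, x j * c j := by
    intro x
    rw [LinearMap.pi_apply_eq_sum_univ]
    exact Finset.sum_congr rfl fun j _ => by rw [smul_eq_mul, hc]
  have hcne : ∃ j, c j ≠ 0 := by
    by_contra hall
    push_neg at hall
    apply hφ0
    apply LinearMap.ext
    intro x
    rw [hφx]
    simp [hall]
  have hzero : ∀ e, ∑ j, rvec f e j * c j = 0 := by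
    intro e
    have hmem : rvec f e ∈ Submodule.span K (Set.range (rvec f)) :=
      Submodule.subset_span (Set.mem_range_self e)
    have hφe : φ (rvec f e) = 0 := by
      have h1 : φ (rvec f e) ∈ (Submodule.span K (Set.range (rvec f))).map φ :=
        Submodule.mem_map_of_mem hmem
      rw [hφmap] at h1
      simpa using h1
    rw [← hφx]
    exact hφe
  obtain ⟨b, hb⟩ := IsLocalization.exist_integer_multiples
    (nonZeroDivisors (MvPolynomial (Fin k) F)) Finset.univ c
  have hb' : ∀ j : Fin w, ∃ r : MvPolynomial (Fin k) F,
      algebraMap R K r = (b : MvPolynomial (Fin k) F) • c j :=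
    fun j => hb j (Finset.mem_univ j)
  choose p hp using hb'
  have hps : ∀ e : Fin k →₀ ℕ, ∑ j, p j * hasseDeriv e (f j) = 0 := by
    intro e
    apply IsFractionRing.injective (MvPolynomial (Fin k) F) K
    rw [map_sum, map_zero]
    have : ∑ j, algebraMap R K (p j * hasseDeriv e (f j))
        = algebraMap R K (b : MvPolynomial (Fin k) F) * ∑ j, rvec f e j * c j := by
      rw [Finset.mul_sum]
      refine Finset.sum_congr rfl fun j _ => ?_
      rw [map_mul, hp j, Algebra.smul_def]
      have hrv : rvec f e j = algebraMap R K (hasseDeriv e (f j)) := rfl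
      rw [hrv]
      ring
    rw [this, hzero e, mul_zero]
  have hp0 : p = 0 := Wronsk.indep_consequence f hind p hps
  obtain ⟨j, hj⟩ := hcne
  apply hj
  have h1 : algebraMap R K (p j) = algebraMap R K (b : MvPolynomial (Fin k) F) * c j := by
    rw [hp j, Algebra.smul_def]
  rw [hp0] at h1
  simp only [Pi.zero_apply, map_zero] at h1
  have hbne : algebraMap R K (b : MvPolynomial (Fin k) F) ≠ 0 := by
    rw [map_ne_zero_iff _ (IsFractionRing.injective (MvPolynomial (Fin k) F) K)]
    exact nonZeroDivisors.coe_ne_zero b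
  rcases mul_eq_zero.mp h1.symm with h | h
  · exact absurd h hbne
  · exact h

theorem finrank_SS (f : Fin w → MvPolynomial (Fin k) F)
    (hdeg : ∀ j : Fin w, ∀ i : Fin k, (f j).degreeOf i ≤ d)
    (hchar : ∀ n : ℕ, 0 < n → n ≤ d → (n : F) ≠ 0)
    (hind : LinearIndependent F f) :
    ∀ m, m < w → m + 1 ≤ Module.finrank K (SS f m) := by
  intro m
  induction m with
  | zero =>
      intro hw
      have hfne : f ⟨0, hw⟩ ≠ 0 := hind.ne_zero ⟨0, hw⟩
      have hrne : rvec f 0 ≠ 0 := by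
        intro h0
        apply hfne
        have := congrFun h0 ⟨0, hw⟩
        rw [Pi.zero_apply] at this
        have h1 : hasseDeriv (0 : Fin k →₀ ℕ) (f ⟨0, hw⟩) = 0 := by
          apply IsFractionRing.injective (MvPolynomial (Fin k) F) K
          rw [map_zero]
          exact this
        rwa [Wronsk.hasseDeriv_zero'] at h1
      have hmem : rvec f 0 ∈ SS f 0 := Submodule.subset_span ⟨0, le_refl 0, rfl⟩
      have hnt : Nontrivial (SS f 0) :=
        ⟨⟨rvec f 0, hmem⟩, 0, fun hcontra => hrne (congrArg Subtype.val hcontra)⟩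
      have hpos : 0 < Module.finrank K (SS f 0) := Module.finrank_pos_iff.mpr hnt
      omega
  | succ m ihm =>
      intro hw
      by_cases hstab : SS f (m + 1) ≤ SS f m
      · have hall : ∀ e, rvec f e ∈ SS f m := rvec_mem_of_stab f hdeg hchar hstab
        have htop : SS f m = ⊤ := by
          rw [eq_top_iff, ← span_rvec_top f hind, Submodule.span_le]
          rintro x ⟨e, rfl⟩
          exact hall e
        have htop' : SS f (m + 1) = ⊤ :=
          eq_top_iff.mpr (htop ▸ SS_mono f (Nat.le_succ m))
        rw [htop']
        rw [finrank_top]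
        rw [Module.finrank_fintype_fun_eq_card, Fintype.card_fin]
        omega
      · have hlt : SS f m < SS f (m + 1) :=
          lt_of_le_of_ne (SS_mono f (Nat.le_succ m)) (fun h => hstab (le_of_eq h.symm))
        have h1 := Submodule.finrank_lt_finrank_of_lt hlt
        have h2 := ihm (by omega)
        omega

theorem exists_indep_rows (f : Fin w → MvPolynomial (Fin k) F)
    (hdeg : ∀ j : Fin w, ∀ i : Fin k, (f j).degreeOf i ≤ d)
    (hchar : ∀ n : ℕ, 0 < n → n ≤ d → (n : F) ≠ 0)
    (hind : LinearIndependent F f) :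
    ∀ i, i ≤ w → ∃ E : Fin i → (Fin k →₀ ℕ), (∀ t, ord (E t) ≤ (t : ℕ)) ∧
      LinearIndependent K (fun t => rvec f (E t)) := by
  intro i
  induction i with
  | zero =>
      intro _
      exact ⟨fun t => t.elim0, fun t => t.elim0, linearIndependent_empty_type⟩
  | succ i ihi =>
      intro hiw
      obtain ⟨E, hord, hli⟩ := ihi (by omega)
      have hrank := finrank_SS f hdeg hchar hind i (by omega)
      have hspan : Module.finrank K
          (Submodule.span K (Set.range fun t => rvec f (E t))) = i := by
        rw [finrank_span_eq_card hli, Fintype.card_fin]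
      have hnotle : ¬ (SS f i ≤ Submodule.span K (Set.range fun t => rvec f (E t))) := by
        intro hle
        have := Submodule.finrank_mono hle
        omega
      have hgen : ∃ e, ord e ≤ i ∧
          rvec f e ∉ Submodule.span K (Set.range fun t => rvec f (E t)) := by
        by_contra hno
        push_neg at hno
        apply hnotle
        rw [SS, Submodule.span_le]
        rintro x ⟨e, he, rfl⟩
        exact hno e he
      obtain ⟨e0, he0, hnot⟩ := hgen
      set E' : Fin (i + 1) → (Fin k →₀ ℕ) := Fin.snoc E e0 with hE'
      refine ⟨E', ?_, ?_⟩
      · intro t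
        refine Fin.lastCases ?_ ?_ t
        · rw [hE', Fin.snoc_last]
          simpa using he0
        · intro t'
          rw [hE', Fin.snoc_castSucc]
          simpa using hord t'
      · have hcomp : (fun t => rvec f (E' t))
            = Fin.snoc (fun t => rvec f (E t)) (rvec f e0) := by
          funext t
          refine Fin.lastCases ?_ ?_ t
          · rw [hE', Fin.snoc_last, Fin.snoc_last]
          · intro t'
            rw [hE', Fin.snoc_castSucc, Fin.snoc_castSucc]
        rw [hcomp]
        exact linearIndependent_fin_snoc.mpr ⟨hli, hnot⟩

end Main


/-- Generalized Wronskian criterion, forward direction: over a field of characteristic zero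
or greater than `d`, if `f 0, …, f (w-1)` (of individual degree at most `d` in each
variable) are linearly independent over `F`, then there are derivative types
`e 0, …, e (w-1)` with `ord (e i) ≤ i` such that the generalized Wronskian matrix
`(∂̸ f j / ∂̸ x^{e i})_{i,j}` has nonzero determinant. -/
theorem exists_nonzero_wronskian_of_linearIndependent {F : Type*} [Field F] (k d w : ℕ)
    (hchar : ∀ n : ℕ, 0 < n → n ≤ d → (n : F) ≠ 0)
    (f : Fin w → MvPolynomial (Fin k) F)
    (hdeg : ∀ j : Fin w, ∀ i : Fin k, (f j).degreeOf i ≤ d)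
    (hind : LinearIndependent F f) :
    ∃ e : Fin w → (Fin k →₀ ℕ), (∀ i : Fin w, ord (e i) ≤ (i : ℕ)) ∧
      Matrix.det (Matrix.of fun i j : Fin w => hasseDeriv (e i) (f j)) ≠ 0 := by
  classical
  obtain ⟨E, hord, hli⟩ := exists_indep_rows f hdeg hchar hind w le_rfl
  refine ⟨E, hord, ?_⟩
  intro hdet0
  set K := FractionRing (MvPolynomial (Fin k) F)
  set M : Matrix (Fin w) (Fin w) (MvPolynomial (Fin k) F) :=
    Matrix.of fun i j : Fin w => hasseDeriv (E i) (f j) with hM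
  have hdet' : (M.map (algebraMap (MvPolynomial (Fin k) F) K)).det = 0 := by
    have h := RingHom.map_det (algebraMap (MvPolynomial (Fin k) F) K) M
    rw [hdet0, map_zero, RingHom.mapMatrix_apply] at h
    exact h.symm
  obtain ⟨v, hv0, hvM⟩ := Matrix.exists_vecMul_eq_zero_iff.mpr hdet'
  have hsum : ∑ t, v t • rvec f (E t) = 0 := by
    funext j
    rw [Finset.sum_apply, Pi.zero_apply]
    have := congrFun hvM j
    rw [Matrix.vecMul, Pi.zero_apply] at this
    rw [← this]
    simp only [dotProduct, Pi.smul_apply, smul_eq_mul, Matrix.map_apply, rvec]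
    rfl
  have hv := Fintype.linearIndependent_iff.mp hli v hsum
  exact hv0 (funext hv)
end

section
/- Let Q(x,y) = Q_1(x)y_1 + ... + Q_m(x)y_m with Q_i ∈ K[x_1,...,x_k] for a field K of characteristic zero or greater than the relevant degrees, and suppose Q_m is nonzero with Q_m(0) ≠ 0 (viewing the Q_i as elements of K[x]). Then for each choice of the homogeneous components of degree at most m−1 of a polynomial f, there is at most one polynomial f ∈ K[x] of degree at most d with those low-degree components satisfying Σ_{i=1}^m Q_i(x)·Δ_{i−1}(f) = 0, where Δ_j(f) = Σ_{||e||_1 = j} z^e · ∂̸f/∂̸x^e ∈ K[x,z] and the identity holds in K[x,z] (equivalently, over K(z)). -/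
open MvPolynomial

/-- `Δ_j(f) = ∑_{‖e‖₁ = j} z^e · ∂̸f/∂̸x^e`, realized as the degree-`j` homogeneous
component (in the outer variables `z`) of `f(x + z) ∈ (K[x])[z]`. -/
noncomputable def Delta {K : Type*} [CommRing K] {k : ℕ} (j : ℕ)
    (f : MvPolynomial (Fin k) K) :
    MvPolynomial (Fin k) (MvPolynomial (Fin k) K) :=
  MvPolynomial.homogeneousComponent j
    (MvPolynomial.aeval (fun i => MvPolynomial.C (MvPolynomial.X i) + MvPolynomial.X i) f)

section Helpers

variable {K : Type*} [CommRing K] {k : ℕ}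

/-- Substitution `x i ↦ (1 + S) · x i`, landing in `(K[x])[S]`. -/
noncomputable def PhiMap (K : Type*) [CommRing K] (k : ℕ) :
    MvPolynomial (Fin k) K →ₐ[K] Polynomial (MvPolynomial (Fin k) K) :=
  MvPolynomial.aeval (fun i => Polynomial.C (MvPolynomial.X i) * (1 + Polynomial.X))

lemma PhiMap_monomial (u : Fin k →₀ ℕ) (c : K) :
    PhiMap K k (monomial u c) =
      Polynomial.C (monomial u c) * (1 + Polynomial.X) ^ (u.degree) := by
  rw [PhiMap, MvPolynomial.aeval_monomial, monomial_eq]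
  rw [Finsupp.prod, Finsupp.degree]
  simp_rw [mul_pow]
  rw [Finset.prod_mul_distrib, Finset.prod_pow_eq_pow_sum]
  simp only [← Polynomial.C_pow, ← map_prod]
  have : (algebraMap K (Polynomial (MvPolynomial (Fin k) K))) c
      = Polynomial.C (MvPolynomial.C c) := rfl
  rw [this, ← mul_assoc, ← Polynomial.C_mul]


  rw [Finsupp.prod]
  rfl

lemma PhiMap_homogeneous {p : MvPolynomial (Fin k) K} {t : ℕ} (hp : p.IsHomogeneous t) :
    PhiMap K k p = Polynomial.C p * (1 + Polynomial.X) ^ t := by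
  conv_lhs => rw [p.as_sum]
  rw [map_sum]
  have : ∀ u ∈ p.support, PhiMap K k (monomial u (coeff u p))
      = Polynomial.C (monomial u (coeff u p)) * (1 + Polynomial.X) ^ t := by
    intro u hu
    have hu' : u.degree = t := by
      rw [Finsupp.degree_eq_weight_one]; exact hp (mem_support_iff.mp hu)
    rw [PhiMap_monomial, hu']
  rw [Finset.sum_congr rfl this, ← Finset.sum_mul, ← map_sum, ← p.as_sum]

/-- Substitution `z i ↦ S · x i` on `(K[x])[z]`, as a `K[x]`-algebra map to `(K[x])[S]`. -/
noncomputable def PsiMap (K : Type*) [CommRing K] (k : ℕ) :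
    MvPolynomial (Fin k) (MvPolynomial (Fin k) K) →ₐ[MvPolynomial (Fin k) K]
      Polynomial (MvPolynomial (Fin k) K) :=
  MvPolynomial.aeval (fun i => Polynomial.C (MvPolynomial.X i) * Polynomial.X)

lemma coeff_PsiMap (P : MvPolynomial (Fin k) (MvPolynomial (Fin k) K)) (j : ℕ) :
    (PsiMap K k P).coeff j =
      MvPolynomial.aeval MvPolynomial.X (homogeneousComponent j P) := by
  induction P using MvPolynomial.induction_on' with
  | monomial u p =>
    rw [PsiMap, MvPolynomial.aeval_monomial]
    rw [Finsupp.prod]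
    simp_rw [mul_pow]
    rw [Finset.prod_mul_distrib, Finset.prod_pow_eq_pow_sum]
    simp only [← Polynomial.C_pow, ← map_prod]
    have ha : (algebraMap (MvPolynomial (Fin k) K) (Polynomial (MvPolynomial (Fin k) K))) p
        = Polynomial.C p := rfl
    rw [ha, ← mul_assoc, ← Polynomial.C_mul, Polynomial.coeff_C_mul, Polynomial.coeff_X_pow]
    have hmem : (monomial u p) ∈ homogeneousSubmodule (Fin k) (MvPolynomial (Fin k) K) u.degree :=
      (mem_homogeneousSubmodule _ _).mpr (isHomogeneous_monomial p rfl)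
    rw [homogeneousComponent_of_mem hmem]
    rw [Finsupp.degree_apply]
    by_cases hj : j = ∑ i ∈ u.support, u i
    · simp only [if_pos hj, mul_one]
      rw [MvPolynomial.aeval_monomial]
      have : (algebraMap (MvPolynomial (Fin k) K) (MvPolynomial (Fin k) K)) p = p := rfl
      rw [this, Finsupp.prod]
    · simp [hj]
  | add p q hp hq =>
    rw [map_add, map_add, Polynomial.coeff_add, map_add, hp, hq]

lemma PsiMap_taylor (h : MvPolynomial (Fin k) K) :
    PsiMap K k (MvPolynomial.aeval
        (fun i => MvPolynomial.C (MvPolynomial.X i) + MvPolynomial.X i) h) = PhiMap K k h := by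
  induction h using MvPolynomial.induction_on with
  | C a =>
    simp only [aeval_C, PsiMap, PhiMap]
    have : (algebraMap K (MvPolynomial (Fin k) (MvPolynomial (Fin k) K))) a
        = MvPolynomial.C (MvPolynomial.C a) := rfl
    rw [this, aeval_C]
    rfl
  | add p q hp hq => simp only [map_add, hp, hq]
  | mul_X p i hp =>
    rw [map_mul, map_mul, hp]
    simp only [map_mul, hp, aeval_X, map_add, aeval_C, PsiMap, PhiMap]
    congr 1
    have : (algebraMap (MvPolynomial (Fin k) K) (Polynomial (MvPolynomial (Fin k) K))) (X i)
          = Polynomial.C (MvPolynomial.X i) := rfl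
    rw [this]; ring

lemma cast_factorial_ne_zero {K : Type*} [Field K] {d : ℕ}
    (hchar : ∀ n : ℕ, 0 < n → n ≤ d → (n : K) ≠ 0) :
    ∀ n : ℕ, n ≤ d → ((n.factorial : ℕ) : K) ≠ 0 := by
  intro n
  induction n with
  | zero => simp
  | succ a ih =>
    intro hle
    rw [Nat.factorial_succ, Nat.cast_mul]
    exact mul_ne_zero (hchar (a+1) (Nat.succ_pos a) hle) (ih (le_trans (Nat.le_succ a) hle))

lemma cast_choose_ne_zero {K : Type*} [Field K] {d : ℕ}
    (hchar : ∀ n : ℕ, 0 < n → n ≤ d → (n : K) ≠ 0) {n r : ℕ} (hn : n ≤ d) (hr : r ≤ n) :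
    ((n.choose r : ℕ) : K) ≠ 0 := by
  intro h0
  have key := Nat.choose_mul_factorial_mul_factorial hr
  have : ((n.choose r * r.factorial * (n - r).factorial : ℕ) : K) = ((n.factorial : ℕ) : K) := by
    rw [key]
  rw [Nat.cast_mul, Nat.cast_mul, h0, zero_mul, zero_mul] at this
  exact cast_factorial_ne_zero hchar n hn this.symm

end Helpers

/-- Uniqueness of solutions of the linear differential equation
`∑_{i=1}^m Q_i(x) · Δ_{i-1}(f) = 0`: if `Q_m` is nonzero with `Q_m(0) ≠ 0`, then a degree
at most `d` solution `f` is uniquely determined by its homogeneous components of degree at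
most `m - 1` (over a field of characteristic zero or greater than `d`). -/
theorem unique_solution_of_differential_equation {K : Type*} [Field K] (k d m : ℕ)
    (hm : 0 < m) (hchar : ∀ n : ℕ, 0 < n → n ≤ d → (n : K) ≠ 0)
    (Q : Fin m → MvPolynomial (Fin k) K)
    (hQm : Q ⟨m - 1, Nat.sub_lt hm one_pos⟩ ≠ 0)
    (hQm0 : MvPolynomial.constantCoeff (Q ⟨m - 1, Nat.sub_lt hm one_pos⟩) ≠ 0)
    (f g : MvPolynomial (Fin k) K)
    (hf : f.totalDegree ≤ d) (hg : g.totalDegree ≤ d)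
    (hlow : ∀ j < m, MvPolynomial.homogeneousComponent j f =
      MvPolynomial.homogeneousComponent j g)
    (hfeq : ∑ i : Fin m, MvPolynomial.C (Q i) * Delta (i : ℕ) f = 0)
    (hgeq : ∑ i : Fin m, MvPolynomial.C (Q i) * Delta (i : ℕ) g = 0) :
    f = g := by
  set h := f - g with hh
  set i₀ : Fin m := ⟨m - 1, Nat.sub_lt hm one_pos⟩ with hi₀
  have hdeg : h.totalDegree ≤ d := le_trans (totalDegree_sub f g) (max_le hf hg)
  have hDl : ∀ j : ℕ, Delta j h = Delta j f - Delta j g := by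
    intro j; simp only [Delta, hh, map_sub]
  have heq : ∑ i : Fin m, MvPolynomial.C (Q i) * Delta (i : ℕ) h = 0 := by
    simp only [hDl, mul_sub]
    rw [Finset.sum_sub_distrib, hfeq, hgeq, sub_zero]
  -- Step B : extract the z-homogeneous component of degree m-1
  have hDm : Delta (m - 1) h = 0 := by
    have h1 := congrArg (homogeneousComponent (m - 1)) heq
    rw [map_sum, map_zero] at h1
    have h2 : ∀ i : Fin m,
        homogeneousComponent (m - 1) (MvPolynomial.C (Q i) * Delta (i : ℕ) h) =
          if (m - 1 : ℕ) = (i : ℕ) then MvPolynomial.C (Q i) * Delta (i : ℕ) h else 0 := by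
      intro i
      have hmem : Delta (i : ℕ) h ∈
          homogeneousSubmodule (Fin k) (MvPolynomial (Fin k) K) (i : ℕ) :=
        homogeneousComponent_mem _ _
      rw [homogeneousComponent_C_mul, homogeneousComponent_of_mem hmem]
      split_ifs <;> simp
    rw [Finset.sum_congr rfl (fun i _ => h2 i)] at h1
    rw [Finset.sum_eq_single i₀ (fun b _ hb => by
        rw [if_neg]
        intro hc
        exact hb (Fin.ext (by simpa [hi₀] using hc.symm)))
      (fun hmem => absurd (Finset.mem_univ i₀) hmem)] at h1
    rw [if_pos rfl] at h1
    rcases mul_eq_zero.mp h1 with h3 | h3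
    · exact absurd (show Q i₀ = 0 by simpa using h3) hQm
    · exact h3
  -- Step C : coefficient of S^(m-1) in h((1+S)x)
  have hPhicoeff : (PhiMap K k h).coeff (m - 1) = 0 := by
    rw [← PsiMap_taylor, coeff_PsiMap]
    have : homogeneousComponent (m - 1)
        (MvPolynomial.aeval
          (fun i => MvPolynomial.C (MvPolynomial.X i) + MvPolynomial.X i) h) =
        Delta (m - 1) h := rfl
    rw [this, hDm, map_zero]
  have e1 : PhiMap K k h = ∑ t ∈ Finset.range (h.totalDegree + 1),
      Polynomial.C (homogeneousComponent t h) * (1 + Polynomial.X) ^ t := by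
    conv_lhs => rw [← sum_homogeneousComponent h]
    rw [map_sum]
    exact Finset.sum_congr rfl fun t _ =>
      PhiMap_homogeneous (homogeneousComponent_isHomogeneous t h)
  have hsum : ∑ t ∈ Finset.range (h.totalDegree + 1),
      MvPolynomial.C ((t.choose (m - 1) : ℕ) : K) * homogeneousComponent t h = 0 := by
    have e2 := congrArg (fun P => Polynomial.coeff P (m - 1)) e1
    simp only [hPhicoeff, Polynomial.finset_sum_coeff, Polynomial.coeff_C_mul,
      Polynomial.coeff_one_add_X_pow] at e2
    refine (Finset.sum_congr rfl fun t _ => ?_).trans e2.symm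
    rw [mul_comm, map_natCast (MvPolynomial.C : K →+* MvPolynomial (Fin k) K)]
  have hcomp : ∀ t : ℕ, homogeneousComponent t h = 0 := by
    intro t
    by_cases ht : t ≤ h.totalDegree
    · by_cases htm : t < m
      · rw [hh, map_sub, hlow t htm, sub_self]
      · push_neg at htm
        have h4 := congrArg (homogeneousComponent t) hsum
        rw [map_sum, map_zero] at h4
        have h5 : ∀ s ∈ Finset.range (h.totalDegree + 1),
            homogeneousComponent t
              (MvPolynomial.C ((s.choose (m - 1) : ℕ) : K) * homogeneousComponent s h) =
            if t = s then
              MvPolynomial.C ((s.choose (m - 1) : ℕ) : K) * homogeneousComponent s h else 0 := by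
          intro s _
          rw [homogeneousComponent_C_mul,
            homogeneousComponent_of_mem (homogeneousComponent_mem s h)]
          split_ifs <;> simp
        rw [Finset.sum_congr rfl h5, Finset.sum_ite_eq (Finset.range (h.totalDegree + 1)) t,
          if_pos (Finset.mem_range.mpr (Nat.lt_succ_of_le ht))] at h4
        rcases mul_eq_zero.mp h4 with h6 | h6
        · exfalso
          have h6' : ((t.choose (m - 1) : ℕ) : MvPolynomial (Fin k) K) = 0 := by
            simpa using h6
          have : ((t.choose (m - 1) : ℕ) : K) = 0 := by
            apply MvPolynomial.C_injective (Fin k) K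
            rw [map_natCast (MvPolynomial.C : K →+* MvPolynomial (Fin k) K), map_zero]
            exact h6'
          exact cast_choose_ne_zero hchar (le_trans ht hdeg)
            (le_trans (Nat.sub_le m 1) htm) this
        · exact h6
    · exact homogeneousComponent_eq_zero _ _ (lt_of_not_ge ht)
  have hzero : h = 0 := by
    rw [← sum_homogeneousComponent h]
    exact Finset.sum_eq_zero fun t _ => hcomp t
  exact sub_eq_zero.mp hzero
end
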